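/- arXiv:2411.06614 — 3 statements merged into one kernel-verified Lean document; each statement's English description precedes it below -/
import Mathlib

section
/- Let A ∈ ℝ^{m×n} have rows A_1,…,A_m with ‖A_i‖ = 1 for all i. Then for every x ∈ ℝ^n, Σ_{i≠j} [ −⟨A_i,x⟩² + (⟨A_i,x⟩ − ⟨A_i,A_j⟩⟨A_j,x⟩)² ] ≥ 2( ‖Ax‖² − ‖AᵀAx‖² ), where the sum runs over ordered pairs (i,j) with i ≠ j. -/
/-!
Write `y = A x` and `G = A Aᵀ`, whose diagonal is `1` because the rows are unit vectors.
Each summand expands as `-yᵢ² + (yᵢ - Gᵢⱼ yⱼ)² = -2 Gᵢⱼ yᵢ yⱼ + Gᵢⱼ² yⱼ²`, while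
`‖Ax‖² - ‖AᵀAx‖² = ‖y‖² - yᵀ G y = -∑_{i ≠ j} Gᵢⱼ yᵢ yⱼ`. Hence the two sides differ by
`∑_{i ≠ j} Gᵢⱼ² yⱼ² ≥ 0`.
-/

open Finset Matrix

theorem sum_sq_transpose_mulVec {ι κ R : Type*} [Fintype ι] [Fintype κ] [CommRing R]
    (A : Matrix ι κ R) (y : ι → R) :
    ∑ k, (Aᵀ *ᵥ y) k ^ 2 = y ⬝ᵥ (A * Aᵀ) *ᵥ y := by
  rw [← mulVec_mulVec, dotProduct_mulVec, ← mulVec_transpose]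
  simp only [dotProduct, sq]

theorem mul_transpose_self_apply_self {ι κ R : Type*} [Fintype κ] [CommRing R]
    (A : Matrix ι κ R) (i : ι) :
    (A * Aᵀ) i i = ∑ k, A i k ^ 2 := by
  simp only [mul_apply, transpose_apply, sq]

theorem dotProduct_mulVec_eq_diag_add_offDiag {ι R : Type*} [Fintype ι] [DecidableEq ι] [CommRing R]
    (G : Matrix ι ι R) (y : ι → R) :
    y ⬝ᵥ G *ᵥ y = ∑ i, G i i * y i ^ 2 +
      ∑ i, ∑ j ∈ univ.filter (fun j => j ≠ i), G i j * y i * y j := by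
  simp only [dotProduct, mulVec, mul_sum, ← sum_add_distrib, filter_ne']
  refine sum_congr rfl fun i _ => ?_
  rw [← add_sum_erase _ _ (mem_univ i)]
  congr 1
  · ring
  · exact sum_congr rfl fun j _ => by ring

theorem sum_offDiag_kaczmarz_ge_of_diag_eq_one {ι : Type*} [Fintype ι] [DecidableEq ι]
    (G : Matrix ι ι ℝ) (hG : ∀ i, G i i = 1) (y : ι → ℝ) :
    ∑ i, ∑ j ∈ univ.filter (fun j => j ≠ i), (-(y i) ^ 2 + (y i - G i j * y j) ^ 2)
      ≥ 2 * (∑ i, y i ^ 2 - y ⬝ᵥ G *ᵥ y) := by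
  have hexpand : ∀ i j, -(y i) ^ 2 + (y i - G i j * y j) ^ 2
      = -2 * (G i j * y i * y j) + (G i j * y j) ^ 2 := fun i j => by ring
  have hsquares : 0 ≤ ∑ i, ∑ j ∈ univ.filter (fun j => j ≠ i), (G i j * y j) ^ 2 :=
    sum_nonneg fun i _ => sum_nonneg fun j _ => sq_nonneg _
  simp only [hexpand, sum_add_distrib, ← mul_sum]
  simp only [dotProduct_mulVec_eq_diag_add_offDiag, hG, one_mul]
  linarith

theorem kaczmarz_kac_sigma_lower_bound_no_denominator {m n : ℕ}
    (A : Matrix (Fin m) (Fin n) ℝ)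
    (hnorm : ∀ i, ∑ k, (A i k) ^ 2 = 1)
    (x : Fin n → ℝ) :
    ∑ i : Fin m, ∑ j ∈ Finset.univ.filter (fun j => j ≠ i),
        (-(∑ k, A i k * x k) ^ 2 +
          ((∑ k, A i k * x k) - (∑ l, A i l * A j l) * (∑ k, A j k * x k)) ^ 2)
      ≥ 2 * ((∑ k, (A.mulVec x k) ^ 2) - ∑ k, (Aᵀ.mulVec (A.mulVec x) k) ^ 2) := by
  have hdiag : ∀ i, (A * Aᵀ) i i = 1 := fun i => by
    rw [mul_transpose_self_apply_self, hnorm]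
  rw [sum_sq_transpose_mulVec]
  -- `∑ k, A i k * x k` is `(A *ᵥ x) i` and `∑ l, A i l * A j l` is `(A * Aᵀ) i j` definitionally.
  exact sum_offDiag_kaczmarz_ge_of_diag_eq_one (A * Aᵀ) hdiag (A *ᵥ x)
end

section
/- Let A ∈ ℝ^{m×n} (m ≥ 2) have rows A_1,…,A_m with ‖A_i‖ = 1 for all i and A_i ≠ ±A_j for i ≠ j. Then for every x ∈ ℝ^n, (1/(m(m−1))) · Σ_{i≠j} ‖φ_{i,j}(A) x‖² ≥ ‖Ax‖² + (1/(m(m−1))) · Σ_{i≠j} [ −⟨A_i,x⟩² + (⟨A_i,x⟩ − ⟨A_i,A_j⟩⟨A_j,x⟩)² · (1 + ⟨A_i,A_j⟩²) ]. -/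
open Finset Matrix

/-! With `t = ⟨A i, A j⟩` and `w = A i - t • A j`, the update changes only the `i`-th entry of
`A x`, from `⟨A i, x⟩` to `⟨w, x⟩ / √(1 - t²)`, and `‖w‖² = 1 - t²`. Since `(1 - t²)(1 + t²) ≤ 1`,
each ordered pair satisfies
`‖φᵢⱼ(A) x‖² ≥ ‖A x‖² - ⟨A i, x⟩² + ⟨w, x⟩² (1 + t²)`,
and averaging over the `m (m - 1)` pairs gives the bound. -/

/-- The Kaczmarz Kac update: replace row `i` of `A` by the renormalized projection of
`A i` onto the orthogonal complement of `A j`. -/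
noncomputable def kkPhi {m n : ℕ} (A : Matrix (Fin m) (Fin n) ℝ) (i j : Fin m) :
    Matrix (Fin m) (Fin n) ℝ :=
  A.updateRow i (fun k =>
    (A i k - (∑ l, A i l * A j l) * A j k) / Real.sqrt (1 - (∑ l, A i l * A j l) ^ 2))

section

variable {ι : Type*} [Fintype ι]

theorem dotProduct_self_sub_dotProduct_smul {u v : ι → ℝ} (hv : v ⬝ᵥ v = 1) :
    (u - (u ⬝ᵥ v) • v) ⬝ᵥ (u - (u ⬝ᵥ v) • v) = u ⬝ᵥ u - (u ⬝ᵥ v) ^ 2 := by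
  simp only [sub_dotProduct, dotProduct_sub, smul_dotProduct, dotProduct_smul, hv,
    dotProduct_comm v u, smul_eq_mul]
  ring

theorem sum_comp_update {α M : Type*} [DecidableEq ι] [AddCommGroup M] (g : α → M)
    (f : ι → α) (i : ι) (c : α) :
    ∑ k, g (Function.update f i c k) = ∑ k, g (f k) - g (f i) + g c := by
  simp_rw [Function.apply_update (fun _ => g)]
  rw [sum_update_of_mem (mem_univ i), ← sum_erase_eq_sub (mem_univ i), sdiff_singleton_eq_erase]
  abel

theorem add_mul_sum_offDiag_le [DecidableEq ι] (hcard : 2 ≤ Fintype.card ι) {S : ℝ}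
    {e f : ι → ι → ℝ} (h : ∀ i j, j ≠ i → S + e i j ≤ f i j) :
    S + 1 / ((Fintype.card ι : ℝ) * ((Fintype.card ι : ℝ) - 1)) *
        ∑ i, ∑ j ∈ univ.filter (fun j => j ≠ i), e i j
      ≤ 1 / ((Fintype.card ι : ℝ) * ((Fintype.card ι : ℝ) - 1)) *
        ∑ i, ∑ j ∈ univ.filter (fun j => j ≠ i), f i j := by
  set N : ℝ := (Fintype.card ι : ℝ)
  have hN : 0 < N * (N - 1) := by
    have : (2 : ℝ) ≤ N := by simp only [N]; exact_mod_cast hcard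
    nlinarith
  have hcount : ∑ i : ι, ∑ _j ∈ univ.filter (fun j => j ≠ i), S = N * (N - 1) * S := by
    simp only [filter_ne', sum_const, card_erase_of_mem (mem_univ _), card_univ, nsmul_eq_mul,
      Nat.cast_sub (one_le_two.trans hcard), Nat.cast_one, N]
    ring
  calc S + 1 / (N * (N - 1)) * ∑ i, ∑ j ∈ univ.filter (fun j => j ≠ i), e i j
      = 1 / (N * (N - 1)) * ∑ i, ∑ j ∈ univ.filter (fun j => j ≠ i), (S + e i j) := by
        simp only [sum_add_distrib, hcount]
        rw [mul_add, ← mul_assoc, one_div_mul_cancel hN.ne', one_mul]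
    _ ≤ 1 / (N * (N - 1)) * ∑ i, ∑ j ∈ univ.filter (fun j => j ≠ i), f i j := by
        gcongr with i _ j hj
        exact h i j (mem_filter.1 hj).2

end

theorem sq_mul_one_add_sq_le_sq_div_sqrt {d t : ℝ} (ht : t ^ 2 ≤ 1) (hd : t ^ 2 = 1 → d = 0) :
    d ^ 2 * (1 + t ^ 2) ≤ (d / √(1 - t ^ 2)) ^ 2 := by
  rcases ht.lt_or_eq with ht | ht
  · rw [div_pow, Real.sq_sqrt (by linarith), le_div_iff₀ (by linarith)]
    nlinarith [mul_nonneg (sq_nonneg d) (sq_nonneg (t ^ 2))]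
  · simp [hd ht]

theorem kkPhi_mulVec {m n : ℕ} (A : Matrix (Fin m) (Fin n) ℝ) (i j : Fin m) (x : Fin n → ℝ) :
    kkPhi A i j *ᵥ x = Function.update (A *ᵥ x) i
      ((A i ⬝ᵥ x - (A i ⬝ᵥ A j) * (A j ⬝ᵥ x)) / √(1 - (A i ⬝ᵥ A j) ^ 2)) := by
  rw [kkPhi, updateRow_mulVec]
  congr 1
  simp only [dotProduct, div_mul_eq_mul_div, ← sum_div, sub_mul, sum_sub_distrib, mul_assoc,
    ← mul_sum]

theorem sum_sq_mulVec_add_le_sum_sq_kkPhi_mulVec {m n : ℕ} (A : Matrix (Fin m) (Fin n) ℝ)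
    {i j : Fin m} (hi : A i ⬝ᵥ A i = 1) (hj : A j ⬝ᵥ A j = 1) (x : Fin n → ℝ) :
    ∑ k, (A *ᵥ x) k ^ 2 + (-(A i ⬝ᵥ x) ^ 2 +
        (A i ⬝ᵥ x - (A i ⬝ᵥ A j) * (A j ⬝ᵥ x)) ^ 2 * (1 + (A i ⬝ᵥ A j) ^ 2))
      ≤ ∑ k, (kkPhi A i j *ᵥ x) k ^ 2 := by
  set w := A i - (A i ⬝ᵥ A j) • A j
  have hww : w ⬝ᵥ w = 1 - (A i ⬝ᵥ A j) ^ 2 := by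
    rw [dotProduct_self_sub_dotProduct_smul hj, hi]
  have hwx : w ⬝ᵥ x = A i ⬝ᵥ x - (A i ⬝ᵥ A j) * (A j ⬝ᵥ x) := by
    simp only [w, sub_dotProduct, smul_dotProduct, smul_eq_mul]
  have hAx : (A *ᵥ x) i = A i ⬝ᵥ x := rfl
  have hw_nonneg : 0 ≤ w ⬝ᵥ w := by simpa using dotProduct_self_star_nonneg w
  -- If `t² = 1` then `w = 0`, so the division by `√0 = 0` in `kkPhi` is harmless.
  have hw_zero (h : (A i ⬝ᵥ A j) ^ 2 = 1) : w ⬝ᵥ x = 0 := by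
    rw [dotProduct_self_eq_zero.1 (show w ⬝ᵥ w = 0 by linarith), zero_dotProduct]
  have key := sq_mul_one_add_sq_le_sq_div_sqrt (by linarith) hw_zero
  rw [kkPhi_mulVec, sum_comp_update (· ^ 2), ← hwx, hAx]
  linarith

theorem kaczmarz_kac_expectation_refined_bound_general {m n : ℕ} (hm : 2 ≤ m)
    (A : Matrix (Fin m) (Fin n) ℝ)
    (hnorm : ∀ i, ∑ k, (A i k) ^ 2 = 1)
    (x : Fin n → ℝ) :
    (1 / ((m : ℝ) * ((m : ℝ) - 1))) *
        ∑ i : Fin m, ∑ j ∈ Finset.univ.filter (fun j => j ≠ i),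
          ∑ k, ((kkPhi A i j).mulVec x k) ^ 2
      ≥ (∑ k, (A.mulVec x k) ^ 2) +
        (1 / ((m : ℝ) * ((m : ℝ) - 1))) *
          ∑ i : Fin m, ∑ j ∈ Finset.univ.filter (fun j => j ≠ i),
            (-(∑ k, A i k * x k) ^ 2 +
              ((∑ k, A i k * x k) - (∑ l, A i l * A j l) * (∑ k, A j k * x k)) ^ 2 *
                (1 + (∑ l, A i l * A j l) ^ 2)) := by
  have hunit (i : Fin m) : A i ⬝ᵥ A i = 1 := by simpa only [dotProduct, sq] using hnorm i
  have := add_mul_sum_offDiag_le (by simpa using hm) fun i j _ =>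
    sum_sq_mulVec_add_le_sum_sq_kkPhi_mulVec A (hunit i) (hunit j) x
  rw [Fintype.card_fin] at this
  exact this

theorem kaczmarz_kac_expectation_refined_bound {m n : ℕ} (hm : 2 ≤ m)
    (A : Matrix (Fin m) (Fin n) ℝ)
    (hnorm : ∀ i, ∑ k, (A i k) ^ 2 = 1)
    (hdist : ∀ i j, i ≠ j → A i ≠ A j ∧ A i ≠ -A j)
    (x : Fin n → ℝ) :
    (1 / ((m : ℝ) * ((m : ℝ) - 1))) *
        ∑ i : Fin m, ∑ j ∈ Finset.univ.filter (fun j => j ≠ i),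
          ∑ k, ((kkPhi A i j).mulVec x k) ^ 2
      ≥ (∑ k, (A.mulVec x k) ^ 2) +
        (1 / ((m : ℝ) * ((m : ℝ) - 1))) *
          ∑ i : Fin m, ∑ j ∈ Finset.univ.filter (fun j => j ≠ i),
            (-(∑ k, A i k * x k) ^ 2 +
              ((∑ k, A i k * x k) - (∑ l, A i l * A j l) * (∑ k, A j k * x k)) ^ 2 *
                (1 + (∑ l, A i l * A j l) ^ 2)) :=
  kaczmarz_kac_expectation_refined_bound_general hm A hnorm x
end

section
/- Let A ∈ ℝ^{m×n} be injective with rows A_1,…,A_m, all nonzero, and let x ∈ ℝ^n satisfy Ax = b. Fix x_0 ∈ ℝ^n and k ∈ ℕ. For a tuple of indices (i_1,…,i_k) ∈ {1,…,m}^k define x_t = x_{t−1} + ((b_{i_t} − ⟨A_{i_t}, x_{t−1}⟩)/‖A_{i_t}‖²) A_{i_t} for t = 1,…,k. Then, averaging over tuples with the product weights Π_{t=1}^k ‖A_{i_t}‖²/‖A‖_F², one has Σ_{(i_1,…,i_k)} ( Π_{t=1}^k ‖A_{i_t}‖²/‖A‖_F² ) · ‖x_k − x‖² ≤ (1 − σ_min(A)²/‖A‖_F²)^k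 · ‖x_0 − x‖², where σ_min(A)² is the smallest eigenvalue of AᵀA. -/
/-!
Let `e = z - x` be the error, `D_i = ‖A_i‖²` and `F = ∑ D_i`. Since `x` lies on every hyperplane,
a Kaczmarz step on row `i` replaces `e` by its orthogonal projection onto `A_iᗮ`, so by Pythagoras
the new squared error, times `D_i`, is `D_i ‖e‖² - ⟨A_i, e⟩²`. Averaging with weights `D_i / F`
gives `‖e‖² - ‖A e‖² / F ≤ (1 - σ / F) ‖e‖²`, because `σ ‖e‖² ≤ eᵀ AᵀA e` for the least eigenvalue
`σ` of `AᵀA`. The indices being independent, summing out the first index and inducting on `k`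
multiplies these one-step factors.
-/

open Finset Matrix

/-- The Kaczmarz projection of `z` onto the hyperplane `{w : ⟨A i, w⟩ = b i}`. -/
noncomputable def kacProj {m n : ℕ} (A : Matrix (Fin m) (Fin n) ℝ) (b : Fin m → ℝ)
    (i : Fin m) (z : Fin n → ℝ) : Fin n → ℝ :=
  z + ((b i - ∑ l, A i l * z l) / (∑ l, (A i l) ^ 2)) • A i

/-- Apply the Kaczmarz projections along a list of row indices, first index first. -/
noncomputable def kacIterate {m n : ℕ} (A : Matrix (Fin m) (Fin n) ℝ) (b : Fin m → ℝ) :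
    List (Fin m) → (Fin n → ℝ) → (Fin n → ℝ)
  | [], z => z
  | i :: rest, z => kacIterate A b rest (kacProj A b i z)

section DotProduct

variable {ι κ : Type*} [Fintype ι] [Fintype κ]

theorem dotProduct_self_nonneg (v : ι → ℝ) : 0 ≤ v ⬝ᵥ v :=
  Fintype.sum_nonneg fun i => mul_self_nonneg (v i)

theorem sum_sq_eq_dotProduct_self (v : ι → ℝ) : ∑ i, v i ^ 2 = v ⬝ᵥ v := by
  simp only [dotProduct, sq]

theorem sum_sub_sq_eq_dotProduct_self (v w : ι → ℝ) :
    ∑ i, (v i - w i) ^ 2 = (v - w) ⬝ᵥ (v - w) :=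
  sum_sq_eq_dotProduct_self (v - w)

theorem dotProduct_self_sub_smul (e a : ι → ℝ) (t : ℝ) :
    (e - t • a) ⬝ᵥ (e - t • a) = e ⬝ᵥ e - 2 * t * (a ⬝ᵥ e) + t ^ 2 * (a ⬝ᵥ a) := by
  simp only [dotProduct_sub, sub_dotProduct, dotProduct_smul, smul_dotProduct, smul_eq_mul,
    dotProduct_comm e a]
  ring

/-- The factor `a ⬝ᵥ a` keeps the identity true for `a = 0`, where the coefficient is `0 / 0`. -/
theorem dotProduct_self_mul_dotProduct_self_sub_proj (e a : ι → ℝ) :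
    (a ⬝ᵥ a) * ((e - (a ⬝ᵥ e / a ⬝ᵥ a) • a) ⬝ᵥ (e - (a ⬝ᵥ e / a ⬝ᵥ a) • a))
      = (a ⬝ᵥ a) * (e ⬝ᵥ e) - (a ⬝ᵥ e) ^ 2 := by
  rcases eq_or_ne a 0 with rfl | ha
  · simp
  have : a ⬝ᵥ a ≠ 0 := fun h => ha (dotProduct_self_eq_zero.mp h)
  rw [dotProduct_self_sub_smul]
  field_simp
  ring

theorem mulVec_dotProduct_mulVec_le (A : Matrix ι κ ℝ) (e : κ → ℝ) :
    (A *ᵥ e) ⬝ᵥ (A *ᵥ e) ≤ (∑ i, A i ⬝ᵥ A i) * (e ⬝ᵥ e) := by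
  simp only [dotProduct, mulVec, ← sq]
  rw [sum_mul]
  gcongr with i
  exact sum_mul_sq_le_sq_mul_sq _ _ _

theorem Matrix.IsHermitian.mul_dotProduct_self_le [DecidableEq ι] {M : Matrix ι ι ℝ}
    (hM : M.IsHermitian) {σ : ℝ} (hσ : σ ∈ lowerBounds {μ | ∃ v, v ≠ 0 ∧ M *ᵥ v = μ • v})
    (e : ι → ℝ) :
    σ * (e ⬝ᵥ e) ≤ e ⬝ᵥ (M *ᵥ e) := by
  have hB : (M - σ • 1).IsHermitian := hM.sub (isHermitian_one.smul (.all σ))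
  have hpsd : (M - σ • 1).PosSemidef := by
    refine hB.posSemidef_iff_eigenvalues_nonneg.mpr fun j => ?_
    have hu := hB.mulVec_eigenvectorBasis j
    rw [sub_mulVec, smul_mulVec, one_mulVec, sub_eq_iff_eq_add, ← add_smul] at hu
    have := hσ ⟨_, fun h => hB.eigenvectorBasis.orthonormal.ne_zero j (by ext1; simp [h]), hu⟩
    simpa using this
  simpa [sub_mulVec, smul_mulVec, dotProduct_sub, dotProduct_smul] using
    hpsd.dotProduct_mulVec_nonneg e

theorem Matrix.mul_dotProduct_self_le_mulVec [DecidableEq κ] {A : Matrix ι κ ℝ} {σ : ℝ}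
    (hσ : σ ∈ lowerBounds {μ | ∃ v, v ≠ 0 ∧ (Aᵀ * A) *ᵥ v = μ • v}) (e : κ → ℝ) :
    σ * (e ⬝ᵥ e) ≤ (A *ᵥ e) ⬝ᵥ (A *ᵥ e) := by
  have hM : (Aᵀ * A).IsHermitian := by simpa using isHermitian_conjTranspose_mul_self A
  simpa [← mulVec_mulVec, dotProduct_mulVec, vecMul_transpose] using
    hM.mul_dotProduct_self_le hσ e

theorem le_sum_dotProduct_self {A : Matrix ι κ ℝ} {σ : ℝ}
    (hσ : ∀ e, σ * (e ⬝ᵥ e) ≤ (A *ᵥ e) ⬝ᵥ (A *ᵥ e)) {v : κ → ℝ} (hv : v ≠ 0) :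
    σ ≤ ∑ i, A i ⬝ᵥ A i :=
  le_of_mul_le_mul_right ((hσ v).trans (mulVec_dotProduct_mulVec_le A v))
    ((dotProduct_self_nonneg v).lt_of_ne' (dotProduct_self_eq_zero.not.mpr hv))

end DotProduct

theorem sum_prod_mul_foldl_ofFn_le {α β : Type*} [Fintype α] {p : α → ℝ} (hp : ∀ i, 0 ≤ p i)
    (step : α → β → β) (f : β → ℝ) {q : ℝ} (hq : 0 ≤ q)
    (hstep : ∀ z, ∑ i, p i * f (step i z) ≤ q * f z) (k : ℕ) (z : β) :
    ∑ idx : Fin k → α, (∏ t, p (idx t)) * f ((List.ofFn idx).foldl (fun w i => step i w) z)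
      ≤ q ^ k * f z := by
  induction k generalizing z with
  | zero => simp
  | succ k ih =>
    rw [← (Fin.consEquiv fun _ => α).sum_comp, Fintype.sum_prod_type]
    calc _ = ∑ i, p i * ∑ idx : Fin k → α,
              (∏ t, p (idx t)) * f ((List.ofFn idx).foldl (fun w i => step i w) (step i z)) := by
          simp [Fin.consEquiv, Fin.prod_univ_succ, List.ofFn_succ, mul_sum, mul_assoc]
      _ ≤ ∑ i, p i * (q ^ k * f (step i z)) := by gcongr with i; exacts [hp i, ih _]
      _ = q ^ k * ∑ i, p i * f (step i z) := by rw [mul_sum]; simp only [mul_left_comm]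
      _ ≤ q ^ k * (q * f z) := by gcongr; exact hstep z
      _ = q ^ (k + 1) * f z := by ring

section Kaczmarz

variable {m n : ℕ} {A : Matrix (Fin m) (Fin n) ℝ} {b : Fin m → ℝ} {x : Fin n → ℝ}

theorem kacIterate_eq_foldl (l : List (Fin m)) (z : Fin n → ℝ) :
    kacIterate A b l z = l.foldl (fun w i => kacProj A b i w) z := by
  induction l generalizing z with
  | nil => rfl
  | cons i l ih => exact ih _

theorem kacProj_sub (hsol : A *ᵥ x = b) (i : Fin m) (z : Fin n → ℝ) :
    kacProj A b i z - x = (z - x) - (A i ⬝ᵥ (z - x) / A i ⬝ᵥ A i) • A i := by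
  have hres : b i - ∑ l, A i l * z l = -(A i ⬝ᵥ (z - x)) := by
    rw [← hsol, dotProduct_sub]
    simp [mulVec, dotProduct]
  rw [kacProj, hres, sum_sq_eq_dotProduct_self, neg_div, neg_smul, ← sub_eq_add_neg,
    sub_right_comm]

theorem sum_mul_dotProduct_kacProj_sub (hsol : A *ᵥ x = b) (z : Fin n → ℝ) :
    ∑ i, (A i ⬝ᵥ A i) * ((kacProj A b i z - x) ⬝ᵥ (kacProj A b i z - x))
      = (∑ i, A i ⬝ᵥ A i) * ((z - x) ⬝ᵥ (z - x)) - (A *ᵥ (z - x)) ⬝ᵥ (A *ᵥ (z - x)) := by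
  simp only [kacProj_sub hsol, dotProduct_self_mul_dotProduct_self_sub_proj, sum_sub_distrib,
    sum_mul]
  simp [dotProduct, mulVec, sq]

theorem sum_div_mul_dotProduct_kacProj_sub_le (hsol : A *ᵥ x = b) {σ : ℝ}
    (hσ : ∀ e, σ * (e ⬝ᵥ e) ≤ (A *ᵥ e) ⬝ᵥ (A *ᵥ e)) (z : Fin n → ℝ) :
    ∑ i, (A i ⬝ᵥ A i / ∑ j, A j ⬝ᵥ A j) * ((kacProj A b i z - x) ⬝ᵥ (kacProj A b i z - x))
      ≤ (1 - σ / ∑ j, A j ⬝ᵥ A j) * ((z - x) ⬝ᵥ (z - x)) := by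
  have hF : 0 ≤ ∑ j, A j ⬝ᵥ A j := sum_nonneg fun j _ => dotProduct_self_nonneg (A j)
  rcases hF.eq_or_lt with hF | hF
  · simp only [← hF, div_zero, zero_mul, sum_const_zero, sub_zero, one_mul]
    exact dotProduct_self_nonneg _
  · simp_rw [div_mul_eq_mul_div, ← sum_div, sum_mul_dotProduct_kacProj_sub hsol,
      one_sub_div hF.ne', div_mul_eq_mul_div]
    gcongr
    linarith [hσ (z - x)]

end Kaczmarz

theorem strohmer_vershynin_randomized_kaczmarz_general {m n : ℕ}
    (A : Matrix (Fin m) (Fin n) ℝ) (b : Fin m → ℝ) (x : Fin n → ℝ)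
    (hsol : A.mulVec x = b)
    (x₀ : Fin n → ℝ) (k : ℕ)
    (σsq : ℝ)
    (hσ : IsLeast {μ : ℝ | ∃ v : Fin n → ℝ, v ≠ 0 ∧ (Aᵀ * A).mulVec v = μ • v} σsq) :
    ∑ idx : Fin k → Fin m,
        (∏ t : Fin k, (∑ l, (A (idx t) l) ^ 2) / (∑ i : Fin m, ∑ l, (A i l) ^ 2)) *
          (∑ d, ((kacIterate A b (List.ofFn idx) x₀) d - x d) ^ 2)
      ≤ (1 - σsq / (∑ i : Fin m, ∑ l, (A i l) ^ 2)) ^ k *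
          ∑ d, (x₀ d - x d) ^ 2 := by
  obtain ⟨v, hv, -⟩ := hσ.1
  have hray := mul_dotProduct_self_le_mulVec hσ.2
  have hF : 0 ≤ ∑ i, A i ⬝ᵥ A i := sum_nonneg fun i _ => dotProduct_self_nonneg (A i)
  have hq : 0 ≤ 1 - σsq / ∑ i, A i ⬝ᵥ A i :=
    sub_nonneg.mpr (div_le_one_of_le₀ (le_sum_dotProduct_self hray hv) hF)
  simp only [sum_sub_sq_eq_dotProduct_self, sum_sq_eq_dotProduct_self, kacIterate_eq_foldl]
  exact sum_prod_mul_foldl_ofFn_le (fun i => div_nonneg (dotProduct_self_nonneg (A i)) hF)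
    (kacProj A b) (fun z => (z - x) ⬝ᵥ (z - x)) hq
    (sum_div_mul_dotProduct_kacProj_sub_le hsol hray) k x₀

theorem strohmer_vershynin_randomized_kaczmarz {m n : ℕ}
    (A : Matrix (Fin m) (Fin n) ℝ) (b : Fin m → ℝ) (x : Fin n → ℝ)
    (hinj : Function.Injective A.mulVec)
    (hrows : ∀ i, A i ≠ 0) (hsol : A.mulVec x = b)
    (x₀ : Fin n → ℝ) (k : ℕ)
    (σsq : ℝ)
    (hσ : IsLeast {μ : ℝ | ∃ v : Fin n → ℝ, v ≠ 0 ∧ (Aᵀ * A).mulVec v = μ • v} σsq) :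
    ∑ idx : Fin k → Fin m,
        (∏ t : Fin k, (∑ l, (A (idx t) l) ^ 2) / (∑ i : Fin m, ∑ l, (A i l) ^ 2)) *
          (∑ d, ((kacIterate A b (List.ofFn idx) x₀) d - x d) ^ 2)
      ≤ (1 - σsq / (∑ i : Fin m, ∑ l, (A i l) ^ 2)) ^ k *
          ∑ d, (x₀ d - x d) ^ 2 :=
  strohmer_vershynin_randomized_kaczmarz_general A b x hsol x₀ k σsq hσ
end
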